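/- arXiv:1006.2926 — 2 statements merged into one kernel-verified Lean document; each statement's English description precedes it below -/
import Mathlib

section
/- Let k ≥ 2 be an integer, let 0 ≤ α ≤ 1 be a real, and let d > 0 be a constant. Let R be a finite family of n regions (subsets) of ℝ² such that for every subfamily R' ⊆ R with m regions, the graph G_0(R') has at most (d/2)·m^{1+α} edges. Then the hypergraph H(R) induced by R admits a k-colorful coloring with at most 4·d·k·n^α + 1 colors; that is, c_{H(R)}(k) = O(k·n^α). -/
/-!
Clarkson–Shor sampling. Keep each region of `V` independently with probability
`p = 1/(2(K+2))`. An edge `rs` of `G_K(V)` becomes an edge of `G_0` of the sample as soon as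
`r` and `s` are kept and the at most `K` other regions through a witness point are dropped,
which happens with probability at least `p²(1-p)^K ≥ p/(4(K+2))`, while `G_0` of the sample
has in expectation at most `(d/2)|V|^α · p|V|` edges. Hence `|E(G_K(V))| ≤ 2d(K+2)|V|^{1+α}`,
so every subfamily has a region of `G_{k-2}`-degree at most `4dk n^α`. Colouring greedily in
the reverse of a removal order of such regions gives a `k`-colourful colouring: if a point
lies in at most `k` of the regions present when `v` is coloured, all the others there are
`G_{k-2}`-neighbours of `v`.
-/

/-- The hyperedge of the hypergraph `H(R)` induced by the family of regions `R`
at the point `p`: the set of (indices of) regions containing `p`. -/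
def hyperedge {ι X : Type} (R : ι → Set X) (p : X) : Set ι := {i | p ∈ R i}

/-- The graph `G_k(R')` for the subfamily `R' = {R i : i ∈ V}` of the family of
planar regions `R`: two distinct regions `r, s ∈ V` are adjacent iff some point
`p ∈ r ∩ s` is contained in at most `k` regions of `R' \ {r, s}`. -/
def GkOn {ι : Type} (k : ℕ) (R : ι → Set (ℝ × ℝ)) (V : Set ι) : SimpleGraph ι where
  Adj r s := r ≠ s ∧ r ∈ V ∧ s ∈ V ∧
    ∃ p, p ∈ R r ∧ p ∈ R s ∧ ({t | t ∈ V ∧ t ≠ r ∧ t ≠ s ∧ p ∈ R t}).ncard ≤ k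
  symm := by
    constructor
    rintro r s ⟨hne, hrV, hsV, p, hr, hs, hcard⟩
    refine ⟨hne.symm, hsV, hrV, p, hs, hr, ?_⟩
    have hset : {t | t ∈ V ∧ t ≠ s ∧ t ≠ r ∧ p ∈ R t}
        = {t | t ∈ V ∧ t ≠ r ∧ t ≠ s ∧ p ∈ R t} := by
      ext t; simp only [Set.mem_setOf_eq]; tauto
    rw [hset]; exact hcard
  loopless := by constructor; rintro r ⟨hne, -⟩; exact hne rfl

open Finset

lemma Finset.exists_subset_ncard_eq_injOn {α β : Type*} [DecidableEq β] (f : α → β)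
    (s : Finset α) {m : ℕ} (hm : m ≤ #(s.image f)) :
    ∃ S ⊆ (s : Set α), S.ncard = m ∧ Set.InjOn f S := by
  obtain ⟨u, hus, hbij⟩ := Set.exists_subset_bijOn (s : Set α) f
  have hmu : m ≤ u.ncard := by
    rwa [← hbij.injOn.ncard_image, hbij.image_eq, ← coe_image, Set.ncard_coe_finset]
  obtain ⟨S, hSu, hS⟩ := Set.exists_subset_card_eq hmu
  exact ⟨S, hSu.trans hus, hS, hbij.injOn.mono hSu⟩

lemma SimpleGraph.exists_mem_card_mul_degree_le {V : Type*} [Fintype V] (G : SimpleGraph V)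
    [DecidableRel G.Adj] {s : Finset V} (hs : s.Nonempty) :
    ∃ v ∈ s, #s * G.degree v ≤ 2 * #G.edgeFinset := by
  refine exists_le_of_sum_le hs ?_
  calc ∑ v ∈ s, #s * G.degree v
      ≤ #s * ∑ v, G.degree v := by rw [← mul_sum]; gcongr; exact subset_univ s
    _ = ∑ _v ∈ s, 2 * #G.edgeFinset := by
        rw [sum_degrees_eq_twice_card_edges, sum_const, smul_eq_mul]

section Sampling

variable {ι : Type*}

/-- The probability that a `p`-random subset of `V` (each element kept independently) is `U`. -/
def sampleProb (p : ℝ) (V U : Finset ι) : ℝ := p ^ #U * (1 - p) ^ (#V - #U)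

lemma sampleProb_nonneg {p : ℝ} (hp0 : 0 ≤ p) (hp1 : p ≤ 1) (V U : Finset ι) :
    0 ≤ sampleProb p V U := by
  have : 0 ≤ 1 - p := by linarith
  unfold sampleProb
  positivity

lemma sum_sampleProb_filter_subset_disjoint [DecidableEq ι] (p : ℝ) {V T F : Finset ι}
    (hT : T ⊆ V) (hF : F ⊆ V) (hTF : Disjoint T F) :
    ∑ U ∈ V.powerset with T ⊆ U ∧ Disjoint U F, sampleProb p V U =
      p ^ #T * (1 - p) ^ #F := by
  set A := V \ (T ∪ F)
  have hA : #A + #T + #F = #V := by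
    rw [card_sdiff_of_subset (union_subset hT hF), card_union_of_disjoint hTF]
    have := card_le_card (union_subset hT hF)
    rw [card_union_of_disjoint hTF] at this
    omega
  have hTW {W} (hW : W ∈ A.powerset) : Disjoint T W :=
    disjoint_of_subset_right (mem_powerset.mp hW) (disjoint_sdiff.mono_left subset_union_left)
  calc ∑ U ∈ V.powerset with T ⊆ U ∧ Disjoint U F, sampleProb p V U
      = ∑ W ∈ A.powerset, sampleProb p V (T ∪ W) := by
        refine sum_nbij' (· \ T) (T ∪ ·) ?_ ?_
          (fun U hU => union_sdiff_of_subset (mem_filter.mp hU).2.1)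
          (fun W hW => union_sdiff_cancel_left (hTW hW)) ?_
        · intro U hU
          simp only [A, mem_filter, mem_powerset, subset_iff, disjoint_left, mem_sdiff,
            mem_union] at hU ⊢
          grind
        · intro W hW
          rw [disjoint_left] at hTF
          simp only [A, mem_filter, mem_powerset, subset_iff, disjoint_left, mem_sdiff,
            mem_union] at hW hT ⊢
          grind
        · intro U hU
          rw [union_sdiff_of_subset (mem_filter.mp hU).2.1]
    _ = ∑ W ∈ A.powerset, p ^ #T * (1 - p) ^ #F * (p ^ #W * (1 - p) ^ (#A - #W)) := by
        refine sum_congr rfl fun W hW => ?_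
        have := card_le_card (mem_powerset.mp hW)
        rw [sampleProb, card_union_of_disjoint (hTW hW),
          show #V - (#T + #W) = #F + (#A - #W) by omega]
        ring
    _ = p ^ #T * (1 - p) ^ #F := by
        rw [← mul_sum, sum_pow_mul_eq_add_pow, add_sub_cancel, one_pow, mul_one]

lemma sum_sampleProb_mul_card [DecidableEq ι] (p : ℝ) (V : Finset ι) :
    ∑ U ∈ V.powerset, sampleProb p V U * #U = p * #V := by
  calc ∑ U ∈ V.powerset, sampleProb p V U * #U
      = ∑ U ∈ V.powerset, ∑ _v ∈ U, sampleProb p V U := by simp [mul_comm]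
    _ = ∑ v ∈ V, ∑ U ∈ V.powerset with {v} ⊆ U ∧ Disjoint U ∅, sampleProb p V U := by
        refine sum_comm' fun U v => ?_
        simp only [mem_powerset, mem_filter, singleton_subset_iff, disjoint_empty_right, and_true]
        exact ⟨fun h => ⟨⟨h.1, h.2⟩, h.1 h.2⟩, fun h => ⟨h.1.1, h.1.2⟩⟩
    _ = p * #V := by
        rw [sum_congr rfl fun v hv => sum_sampleProb_filter_subset_disjoint p
          (singleton_subset_iff.mpr hv) (empty_subset V) (disjoint_empty_right _)]
        simp [mul_comm]

end Sampling

namespace GkOn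

variable {ι : Type} (R : ι → Set (ℝ × ℝ))

lemma exists_forall_adj_zero [DecidableEq ι] {K : ℕ} {V : Finset ι} {r s : ι}
    (h : (GkOn K R ↑V).Adj r s) :
    ∃ F ⊆ V, Disjoint {r, s} F ∧ #F ≤ K ∧
      ∀ U ⊆ V, {r, s} ⊆ U → Disjoint U F → (GkOn 0 R ↑U).Adj r s := by
  classical
  obtain ⟨hrs, -, -, q, hqr, hqs, hcard⟩ := h
  refine ⟨{t ∈ V | t ≠ r ∧ t ≠ s ∧ q ∈ R t}, filter_subset _ _, ?_, ?_, ?_⟩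
  · simp [disjoint_left]
  · rwa [← Set.ncard_coe_finset, coe_filter]
  · intro U hUV hrsU hUF
    rw [insert_subset_iff, singleton_subset_iff] at hrsU
    refine ⟨hrs, hrsU.1, hrsU.2, q, hqr, hqs, ?_⟩
    have : {t | t ∈ (U : Set ι) ∧ t ≠ r ∧ t ≠ s ∧ q ∈ R t} = ∅ :=
      Set.eq_empty_of_forall_notMem fun t ⟨htU, ht⟩ =>
        disjoint_left.mp hUF htU (mem_filter.mpr ⟨hUV htU, ht⟩)
    rw [this, Set.ncard_empty]

open scoped Classical in
lemma pow_mul_le_sum_sampleProb {K : ℕ} {V : Finset ι} {r s : ι} {p : ℝ} (hp0 : 0 ≤ p)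
    (hp1 : p ≤ 1) (h : (GkOn K R ↑V).Adj r s) :
    p ^ 2 * (1 - p) ^ K ≤
      ∑ U ∈ V.powerset.filter fun U : Finset ι => (GkOn 0 R ↑U).Adj r s,
        sampleProb p V U := by
  obtain ⟨F, hFV, hrsF, hF, hadj⟩ := exists_forall_adj_zero R h
  have hrsV : {r, s} ⊆ V := by
    rw [insert_subset_iff, singleton_subset_iff]; exact ⟨h.2.1, h.2.2.1⟩
  calc p ^ 2 * (1 - p) ^ K ≤ p ^ #{r, s} * (1 - p) ^ #F := by
        rw [card_pair h.ne]
        have : (1 - p) ^ K ≤ (1 - p) ^ #F := pow_le_pow_of_le_one (by linarith) (by linarith) hF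
        gcongr
    _ = ∑ U ∈ V.powerset with {r, s} ⊆ U ∧ Disjoint U F, sampleProb p V U :=
        (sum_sampleProb_filter_subset_disjoint p hrsV hFV hrsF).symm
    _ ≤ ∑ U ∈ V.powerset.filter fun U : Finset ι => (GkOn 0 R ↑U).Adj r s,
          sampleProb p V U := by
        refine sum_le_sum_of_subset_of_nonneg (fun U hU => ?_) fun U _ _ =>
          sampleProb_nonneg hp0 hp1 V U
        rw [mem_filter, mem_powerset] at hU ⊢
        exact ⟨hU.1, hadj U hU.1 hU.2.1 hU.2.2⟩

open scoped Classical in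
lemma sq_mul_one_sub_pow_mul_ncard_edgeSet_le [Fintype ι] (K : ℕ) (V : Finset ι) {p c : ℝ}
    (hp0 : 0 ≤ p) (hp1 : p ≤ 1)
    (hG0 : ∀ U ⊆ V, ((GkOn 0 R ↑U).edgeSet.ncard : ℝ) ≤ c * #U) :
    p ^ 2 * (1 - p) ^ K * (GkOn K R ↑V).edgeSet.ncard ≤ c * p * #V := by
  set E := (GkOn K R ↑V).edgeFinset
  have hE : (GkOn K R ↑V).edgeSet.ncard = #E := by
    rw [← SimpleGraph.coe_edgeFinset, Set.ncard_coe_finset]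
  calc p ^ 2 * (1 - p) ^ K * (GkOn K R ↑V).edgeSet.ncard
      = ∑ _e ∈ E, p ^ 2 * (1 - p) ^ K := by rw [hE, sum_const, nsmul_eq_mul, mul_comm]
    _ ≤ ∑ e ∈ E,
          ∑ U ∈ V.powerset.filter fun U : Finset ι => e ∈ (GkOn 0 R ↑U).edgeSet,
            sampleProb p V U := by
        refine sum_le_sum fun e he => ?_
        induction e using Sym2.ind with
        | _ r s => exact pow_mul_le_sum_sampleProb R hp0 hp1 (SimpleGraph.mem_edgeFinset.mp he)
    _ = ∑ U ∈ V.powerset, ∑ _e ∈ E.filter (· ∈ (GkOn 0 R ↑U).edgeSet),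
          sampleProb p V U :=
        sum_comm' fun e U => by simp only [mem_filter]; tauto
    _ ≤ ∑ U ∈ V.powerset, sampleProb p V U * (c * #U) := by
        refine sum_le_sum fun U hU => ?_
        rw [sum_const, nsmul_eq_mul, mul_comm]
        have hsub : ((E.filter (· ∈ (GkOn 0 R ↑U).edgeSet) : Finset _) : Set _) ⊆
            (GkOn 0 R ↑U).edgeSet := fun e he => (mem_filter.mp (mem_coe.mp he)).2
        have := Set.ncard_le_ncard hsub (Set.toFinite _)
        rw [Set.ncard_coe_finset] at this
        gcongr
        · exact sampleProb_nonneg hp0 hp1 V U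
        · exact (Nat.cast_le.mpr this).trans (hG0 U (mem_powerset.mp hU))
    _ = c * p * #V := by
        simp_rw [mul_left_comm _ c, ← mul_sum, sum_sampleProb_mul_card, mul_assoc]

lemma ncard_edgeSet_le [Fintype ι] (K : ℕ) (V : Finset ι) {c : ℝ}
    (hG0 : ∀ U ⊆ V, ((GkOn 0 R ↑U).edgeSet.ncard : ℝ) ≤ c * #U) :
    ((GkOn K R ↑V).edgeSet.ncard : ℝ) ≤ 4 * (K + 2) * c * #V := by
  set p : ℝ := (2 * (K + 2))⁻¹
  have hp0 : 0 < p := by positivity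
  have hp : 2 * (K + 2) * p = 1 := mul_inv_cancel₀ (by positivity)
  have hKp : 0 ≤ K * p := by positivity
  have hpow : 1 / 2 ≤ (1 - p) ^ K := by
    have := one_add_mul_le_pow (a := -p) (by linarith) K
    rw [mul_neg, ← sub_eq_add_neg, ← sub_eq_add_neg] at this
    linarith
  have hone : 1 ≤ 4 * (K + 2) * (p * (1 - p) ^ K) := by nlinarith
  have hsample := sq_mul_one_sub_pow_mul_ncard_edgeSet_le R K V hp0.le (by linarith) hG0
  have hN : p * (1 - p) ^ K * (GkOn K R ↑V).edgeSet.ncard ≤ c * #V := by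
    refine le_of_mul_le_mul_left ?_ hp0
    linarith
  set N : ℝ := ((GkOn K R ↑V).edgeSet.ncard : ℝ)
  calc N ≤ 4 * (K + 2) * (p * (1 - p) ^ K) * N := le_mul_of_one_le_left (by positivity) hone
    _ = 4 * (K + 2) * (p * (1 - p) ^ K * N) := by ring
    _ ≤ 4 * (K + 2) * (c * #V) := by gcongr
    _ = 4 * (K + 2) * c * #V := by ring

lemma ncard_edgeSet_le_rpow [Fintype ι] (K : ℕ) {α d : ℝ} (hα : 0 ≤ α) (hd : 0 ≤ d)
    (hedges : ∀ V' : Finset ι,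
      ((GkOn 0 R ↑V').edgeSet.ncard : ℝ) ≤ d / 2 * (#V' : ℝ) ^ (1 + α))
    (V : Finset ι) :
    ((GkOn K R ↑V).edgeSet.ncard : ℝ) ≤ 2 * d * (K + 2) * (#V : ℝ) ^ (1 + α) := by
  have hsplit (m : ℕ) : (m : ℝ) ^ (1 + α) = (m : ℝ) ^ α * m := by
    rw [Real.rpow_add' (Nat.cast_nonneg m) (by linarith), Real.rpow_one, mul_comm]
  have hG0 (U) (hU : U ⊆ V) :
      ((GkOn 0 R ↑U).edgeSet.ncard : ℝ) ≤ d / 2 * (#V : ℝ) ^ α * #U := by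
    refine (hedges U).trans ?_
    rw [hsplit, ← mul_assoc]
    gcongr
  calc ((GkOn K R ↑V).edgeSet.ncard : ℝ) ≤ 4 * (K + 2) * (d / 2 * (#V : ℝ) ^ α) * #V :=
        ncard_edgeSet_le R K V hG0
    _ = 2 * d * (K + 2) * (#V : ℝ) ^ (1 + α) := by rw [hsplit]; ring

open scoped Classical in
lemma exists_degree_le [Fintype ι] (K : ℕ) {α d : ℝ} (hα : 0 ≤ α) (hd : 0 ≤ d)
    (hedges : ∀ V' : Finset ι,
      ((GkOn 0 R ↑V').edgeSet.ncard : ℝ) ≤ d / 2 * (#V' : ℝ) ^ (1 + α))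
    {V : Finset ι} (hV : V.Nonempty) :
    ∃ v ∈ V,
      ((GkOn K R ↑V).degree v : ℝ) ≤ 4 * d * (K + 2) * (Fintype.card ι : ℝ) ^ α := by
  obtain ⟨v, hv, hdeg⟩ := (GkOn K R ↑V).exists_mem_card_mul_degree_le hV
  refine ⟨v, hv, ?_⟩
  have hm : (0 : ℝ) < #V := by exact_mod_cast hV.card_pos
  have hE := ncard_edgeSet_le_rpow R K hα hd hedges V
  rw [← SimpleGraph.coe_edgeFinset, Set.ncard_coe_finset,
    Real.rpow_add' hm.le (by linarith), Real.rpow_one] at hE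
  have hVn : (#V : ℝ) ^ α ≤ (Fintype.card ι : ℝ) ^ α :=
    Real.rpow_le_rpow hm.le (by exact_mod_cast card_le_univ V) hα
  have hdeg' :
      (#V : ℝ) * (GkOn K R ↑V).degree v ≤ #V * (4 * d * (K + 2) * (#V : ℝ) ^ α) := by
    have : ((#V * (GkOn K R ↑V).degree v : ℕ) : ℝ) ≤
        (2 * #(GkOn K R ↑V).edgeFinset : ℕ) :=
      Nat.cast_le.mpr hdeg
    push_cast at this
    nlinarith
  calc ((GkOn K R ↑V).degree v : ℝ) ≤ 4 * d * (K + 2) * (#V : ℝ) ^ α :=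
        le_of_mul_le_mul_left hdeg' hm
    _ ≤ 4 * d * (K + 2) * (Fintype.card ι : ℝ) ^ α := by gcongr

open scoped Classical in
lemma adj_of_card_filter_le {K : ℕ} {V : Finset ι} {q : ℝ × ℝ} {v w : ι} (hvw : v ≠ w)
    (hv : v ∈ V) (hw : w ∈ V) (hqv : q ∈ R v) (hqw : q ∈ R w)
    (hcard : #{i ∈ V | q ∈ R i} ≤ K + 2) :
    (GkOn K R ↑V).Adj v w := by
  refine ⟨hvw, hv, hw, q, hqv, hqw, ?_⟩
  have hset : {t | t ∈ (V : Set ι) ∧ t ≠ v ∧ t ≠ w ∧ q ∈ R t} =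
      ↑(({i ∈ V | q ∈ R i}.erase v).erase w) := by
    ext t
    simp only [Set.mem_ofPred_eq, coe_erase, coe_filter, Set.mem_sdiff, Set.mem_singleton_iff]
    tauto
  have hvq : v ∈ {i ∈ V | q ∈ R i} := mem_filter.mpr ⟨hv, hqv⟩
  have hwq : w ∈ {i ∈ V | q ∈ R i}.erase v :=
    mem_erase.mpr ⟨hvw.symm, mem_filter.mpr ⟨hw, hqw⟩⟩
  rw [hset, Set.ncard_coe_finset, card_erase_of_mem hwq, card_erase_of_mem hvq]
  omega

open scoped Classical in
lemma exists_colorful_of_degree_le [Fintype ι] (K D : ℕ)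
    (hdeg : ∀ V : Finset ι, V.Nonempty → ∃ v ∈ V, (GkOn K R ↑V).degree v ≤ D)
    (V : Finset ι) :
    ∃ φ : ι → ℕ, (∀ i, φ i ≤ D) ∧
      ∀ q, min #{i ∈ V | q ∈ R i} (K + 2) ≤ #({i ∈ V | q ∈ R i}.image φ) := by
  induction V using Finset.strongInduction with
  | H V ih =>
  rcases V.eq_empty_or_nonempty with rfl | hV
  · exact ⟨0, fun _ => Nat.zero_le D, fun q => by simp⟩
  obtain ⟨v, hv, hvD⟩ := hdeg V hV
  obtain ⟨φ, hφD, hφ⟩ := ih (V.erase v) (erase_ssubset hv)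
  set N := (GkOn K R ↑V).neighborFinset v
  obtain ⟨c, hcD, hcN⟩ : ∃ c ≤ D, c ∉ N.image φ := by
    have : #(N.image φ) < #(range (D + 1)) := by
      rw [card_range]; exact Nat.lt_succ_of_le (card_image_le.trans hvD)
    obtain ⟨c, hc, hcN⟩ := exists_mem_notMem_of_card_lt_card this
    exact ⟨c, Nat.lt_succ_iff.mp (mem_range.mp hc), hcN⟩
  refine ⟨Function.update φ v c, fun i => ?_, fun q => ?_⟩
  · rcases eq_or_ne i v with rfl | hi
    · simpa using hcD
    · simpa [hi] using hφD i
  set e := {i ∈ V | q ∈ R i}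
  have hφq : min #(e.erase v) (K + 2) ≤ #((e.erase v).image φ) := by
    rw [← filter_erase]; exact hφ q
  have himage : (e.erase v).image (Function.update φ v c) = (e.erase v).image φ :=
    image_congr fun i hi => Function.update_of_ne (ne_of_mem_erase hi) c φ
  by_cases hve : v ∈ e
  · have hcard : #(e.erase v) + 1 = #e := card_erase_add_one hve
    conv_rhs => rw [← insert_erase hve, image_insert, himage, Function.update_self]
    by_cases hsmall : #e ≤ K + 2
    · -- every other region at `q` is a neighbour of `v`, so `c` is a new colour on `e`
      have hc : c ∉ (e.erase v).image φ := by
        refine fun hc => hcN (image_subset_image (fun w hw => ?_) hc)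
        obtain ⟨hwv, hwe⟩ := mem_erase.mp hw
        exact (SimpleGraph.mem_neighborFinset _ _ _).mpr <|
          adj_of_card_filter_le R hwv.symm hv (mem_filter.mp hwe).1 (mem_filter.mp hve).2
            (mem_filter.mp hwe).2 hsmall
      rw [card_insert_of_notMem hc]
      omega
    · have := card_le_card (subset_insert c ((e.erase v).image φ))
      omega
  · rw [erase_eq_of_notMem hve] at himage hφq
    rwa [himage]

end GkOn

theorem stmt4_general {ι : Type} [Fintype ι] (k : ℕ) (hk : 2 ≤ k) (α d : ℝ)
    (hα0 : 0 ≤ α) (hd : 0 < d) (R : ι → Set (ℝ × ℝ))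
    (n : ℕ) (hn : n = Fintype.card ι)
    (hedges : ∀ V' : Finset ι,
      (((GkOn 0 R ↑V').edgeSet).ncard : ℝ) ≤ (d / 2) * (V'.card : ℝ) ^ (1 + α)) :
    ∃ φ : ι → ℕ,
      ((Finset.univ.image φ).card : ℝ) ≤ 4 * d * k * (n : ℝ) ^ α + 1 ∧
      ∀ p : ℝ × ℝ, ∃ S ⊆ hyperedge R p,
        S.ncard = min (hyperedge R p).ncard k ∧ Set.InjOn φ S := by
  classical
  subst hn
  have hk' : k - 2 + 2 = k := Nat.sub_add_cancel hk
  set D := ⌊4 * d * k * (Fintype.card ι : ℝ) ^ α⌋₊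
  have hdeg (V : Finset ι) (hV : V.Nonempty) :
      ∃ v ∈ V, (GkOn (k - 2) R ↑V).degree v ≤ D := by
    obtain ⟨v, hv, hvdeg⟩ := GkOn.exists_degree_le R (k - 2) hα0 hd.le hedges hV
    refine ⟨v, hv, Nat.le_floor ?_⟩
    rwa [show ((k - 2 : ℕ) : ℝ) + 2 = k by exact_mod_cast hk'] at hvdeg
  obtain ⟨φ, hφD, hφ⟩ := GkOn.exists_colorful_of_degree_le R (k - 2) D hdeg univ
  refine ⟨φ, ?_, fun q => ?_⟩
  · have hcolors : #(univ.image φ) ≤ D + 1 := by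
      simpa using card_le_card
        (image_subset_iff.mpr fun i _ => mem_range.mpr (Nat.lt_succ_of_le (hφD i)))
    calc (#(univ.image φ) : ℝ) ≤ D + 1 := by exact_mod_cast hcolors
      _ ≤ 4 * d * k * (Fintype.card ι : ℝ) ^ α + 1 := by
          gcongr; exact Nat.floor_le (by positivity)
  · have he : hyperedge R q = ↑({i ∈ univ | q ∈ R i} : Finset ι) := by ext; simp [hyperedge]
    rw [he, Set.ncard_coe_finset]
    exact Finset.exists_subset_ncard_eq_injOn φ _ (hk' ▸ hφ q)

theorem stmt4 {ι : Type} [Fintype ι] (k : ℕ) (hk : 2 ≤ k) (α d : ℝ)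
    (hα0 : 0 ≤ α) (hα1 : α ≤ 1) (hd : 0 < d) (R : ι → Set (ℝ × ℝ))
    (n : ℕ) (hn : n = Fintype.card ι)
    (hedges : ∀ V' : Finset ι,
      (((GkOn 0 R ↑V').edgeSet).ncard : ℝ) ≤ (d / 2) * (V'.card : ℝ) ^ (1 + α)) :
    ∃ φ : ι → ℕ,
      ((Finset.univ.image φ).card : ℝ) ≤ 4 * d * k * (n : ℝ) ^ α + 1 ∧
      ∀ p : ℝ × ℝ, ∃ S ⊆ hyperedge R p,
        S.ncard = min (hyperedge R p).ncard k ∧ Set.InjOn φ S :=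
  stmt4_general k hk α d hα0 hd R n hn hedges
end

section
/- Let k ≥ 2 be an integer, let 0 ≤ α ≤ 1 be a real, and let d > 0 be a constant. Let R be a finite family of n ≥ 2 regions (subsets) of ℝ² such that for every subfamily R' ⊆ R with m regions, the graph G_0(R') has at most (d/2)·m^{1+α} edges, and let H = H(R). Then there exists a constant C depending only on d and α such that: if α = 0 then H admits a (k−1)-strong-conflict-free coloring with at most C·k·log n colors, and if 0 < α ≤ 1 then H admits a (k−1)-strong-conflict-free coloring with at most C·k·n^α colors. -/
/-- A coloring `φ` of the family of regions `R` is `k`-strong-conflict-free for the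
induced hypergraph `H(R)` if every hyperedge of size at least `k` contains `k` regions
whose colors appear exactly once in the hyperedge, and every hyperedge of size less
than `k` is rainbow. -/
def IsSCFRegions {ι : Type} (k : ℕ) (R : ι → Set (ℝ × ℝ)) (φ : ι → ℕ) : Prop :=
  ∀ p : ℝ × ℝ,
    (k ≤ (hyperedge R p).ncard → ∃ S ⊆ hyperedge R p, S.ncard = k ∧
        ∀ i ∈ S, ∀ j ∈ hyperedge R p, φ j = φ i → j = i) ∧
    ((hyperedge R p).ncard < k → Set.InjOn φ (hyperedge R p))

/-!
Sampling (Clarkson–Shor) transfers the sparsity of every `G_0(R')` to `G_K(R')`: it has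
`O((K + 1) m^(1 + α))` edges, so `G_K` of every subfamily has a region of degree `O(k m^α)`.
Colouring greedily along such regions gives a `(K + 2)`-colorful colouring of the subfamily with
`O(k m^α)` colours, and its largest colour class `I` meets every hyperedge of size at most
`K + 1` at most once while leaving at least `K + 1` regions of every larger hyperedge. Giving `I`
a fresh colour above all later ones and recursing on the rest yields a `(K + 1)`-strong
conflict-free colouring. Each round removes a `1 / O(k m^α)` fraction of the regions, so there
are `O(k log n)` rounds for `α = 0` and `O(k n^α / α)` rounds for `α > 0`; take `K = k - 2`.
-/

open Finset Real

section

open scoped Classical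

section Hyperedges

variable {ι X : Type}

noncomputable def hyperedgeIn (R : ι → Set X) (V : Finset ι) (p : X) : Finset ι :=
  {i ∈ V | p ∈ R i}

variable {R : ι → Set X} {V : Finset ι} {p : X}

@[simp]
lemma mem_hyperedgeIn {i : ι} : i ∈ hyperedgeIn R V p ↔ i ∈ V ∧ p ∈ R i := by
  simp [hyperedgeIn]

lemma hyperedgeIn_sdiff (I : Finset ι) :
    hyperedgeIn R (V \ I) p = hyperedgeIn R V p \ I := by
  ext; simp [and_right_comm]

lemma hyperedgeIn_erase (r : ι) :
    hyperedgeIn R (V.erase r) p = (hyperedgeIn R V p).erase r := by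
  ext; simp [and_assoc]

lemma coe_hyperedgeIn_univ [Fintype ι] : (hyperedgeIn R univ p : Set ι) = hyperedge R p := by
  ext; simp [hyperedge, mem_hyperedgeIn]

noncomputable def uniquelyColored (φ : ι → ℕ) (e : Finset ι) : Finset ι :=
  {i ∈ e | ∀ j ∈ e, φ j = φ i → j = i}

lemma mem_uniquelyColored {φ : ι → ℕ} {e : Finset ι} {x : ι} :
    x ∈ uniquelyColored φ e ↔ x ∈ e ∧ ∀ j ∈ e, φ j = φ x → j = x := by
  unfold uniquelyColored; exact mem_filter

lemma uniquelyColored_subset (φ : ι → ℕ) (e : Finset ι) : uniquelyColored φ e ⊆ e :=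
  fun _ hx => (mem_uniquelyColored.1 hx).1

/-- The `min` packs two clauses: a hyperedge with at most `k` regions is rainbow, a larger one
shows at least `k` colours. `IsStrongCF` is the same with uniquely coloured regions in place of
colours, i.e. the form of `IsSCFRegions k` relative to the subfamily `V`. -/
def IsColorful (R : ι → Set X) (k : ℕ) (V : Finset ι) (χ : ι → ℕ) : Prop :=
  ∀ p, min #(hyperedgeIn R V p) k ≤ #((hyperedgeIn R V p).image χ)

def IsStrongCF (R : ι → Set X) (k : ℕ) (V : Finset ι) (φ : ι → ℕ) : Prop :=
  ∀ p, min #(hyperedgeIn R V p) k ≤ #(uniquelyColored φ (hyperedgeIn R V p))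

def IsPeelableLayer (R : ι → Set X) (k : ℕ) (V I : Finset ι) : Prop :=
  ∀ p, (#(hyperedgeIn R V p) ≤ k → #(hyperedgeIn R V p ∩ I) ≤ 1) ∧
    (k < #(hyperedgeIn R V p) → k ≤ #(hyperedgeIn R V p \ I))

end Hyperedges

section GkOn

variable {ι : Type} {R : ι → Set (ℝ × ℝ)} {K : ℕ} {V : Finset ι}

lemma GkOn_adj_iff {r s : ι} :
    (GkOn K R V).Adj r s ↔ r ≠ s ∧ ∃ p, r ∈ hyperedgeIn R V p ∧ s ∈ hyperedgeIn R V p ∧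
      #(hyperedgeIn R V p) ≤ K + 2 := by
  have others (p) : {t | t ∈ (V : Set ι) ∧ t ≠ r ∧ t ≠ s ∧ p ∈ R t} =
      ↑(((hyperedgeIn R V p).erase r).erase s) := by
    ext; simp only [Set.mem_ofPred_eq, coe_erase, Set.mem_sdiff, mem_coe, mem_hyperedgeIn,
      Set.mem_singleton_iff]; tauto
  simp only [GkOn, others, Set.ncard_coe_finset, mem_hyperedgeIn]
  constructor
  · rintro ⟨hrs, hr, hs, p, hpr, hps, hcard⟩
    refine ⟨hrs, p, ⟨hr, hpr⟩, ⟨hs, hps⟩, ?_⟩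
    have := pred_card_le_card_erase (s := (hyperedgeIn R V p).erase r) (a := s)
    have := pred_card_le_card_erase (s := hyperedgeIn R V p) (a := r)
    omega
  · rintro ⟨hrs, p, ⟨hr, hpr⟩, ⟨hs, hps⟩, hcard⟩
    refine ⟨hrs, hr, hs, p, hpr, hps, ?_⟩
    rw [card_erase_of_mem (by simp [hrs.symm, hs, hps]), card_erase_of_mem (by simp [hr, hpr])]
    omega

lemma GkOn_zero_adj_union_pair {p : ℝ × ℝ} {r s : ι} {S : Finset ι} (hrs : r ≠ s)
    (hr : p ∈ R r) (hs : p ∈ R s) (hS : ∀ i ∈ S, p ∉ R i) :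
    (GkOn 0 R ↑(S ∪ {r, s})).Adj r s := by
  refine GkOn_adj_iff.2 ⟨hrs, p, by simp [hr], by simp [hs],
    (card_le_card fun i hi => ?_).trans (card_le_two (a := r) (b := s))⟩
  obtain ⟨hiS, hip⟩ := mem_hyperedgeIn.1 hi
  exact (mem_union.1 hiS).resolve_left fun h => hS i h hip

/-- An edge `rs` of `G_K(V)` survives in `G_0(S)` for every `S ⊆ V` containing `r, s` and
avoiding the at most `K + 2` regions through a witness point of `rs`. -/
lemma choose_le_card_bipartiteAbove_GkOn {t : ℕ} (ht : 2 ≤ t) {r s : ι}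
    (hrs : (GkOn K R V).Adj r s) :
    (#V - (K + 2)).choose (t - 2) ≤ #((V.powersetCard t).bipartiteAbove
      (fun e (S : Finset ι) => e ∈ (GkOn 0 R S).edgeSet) s(r, s)) := by
  obtain ⟨hne, p, hr, hs, hcard⟩ := GkOn_adj_iff.1 hrs
  rw [mem_hyperedgeIn] at hr hs
  set e := hyperedgeIn R V p
  have heV : e ⊆ V := fun i hi => (mem_hyperedgeIn.1 hi).1
  have hdisj : ∀ S' ⊆ V \ e, Disjoint S' {r, s} := fun S' hS' =>
    disjoint_left.2 fun i hi hirs => (mem_sdiff.1 (hS' hi)).2 <| by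
      rcases mem_insert.1 hirs with rfl | h
      · exact mem_hyperedgeIn.2 hr
      · exact mem_singleton.1 h ▸ mem_hyperedgeIn.2 hs
  calc (#V - (K + 2)).choose (t - 2)
      ≤ (#(V \ e)).choose (t - 2) := by
        refine Nat.choose_le_choose _ ?_
        rw [card_sdiff_of_subset heV]
        omega
    _ = #((V \ e).powersetCard (t - 2)) := (card_powersetCard _ _).symm
    _ ≤ _ := by
      refine card_le_card_of_injOn (fun S' : Finset ι => S' ∪ {r, s}) (fun S' hS' => ?_)
        (fun S₁ h₁ S₂ h₂ h => ?_)
      · obtain ⟨hS'sub, hS'card⟩ := mem_powersetCard.1 (mem_coe.1 hS')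
        have hrsV : ({r, s} : Finset ι) ⊆ V := by simp [insert_subset_iff, hr.1, hs.1]
        refine (mem_bipartiteAbove _).2 ⟨mem_powersetCard.2 ⟨union_subset
          (hS'sub.trans sdiff_subset) hrsV, ?_⟩, GkOn_zero_adj_union_pair hne hr.2 hs.2 ?_⟩
        · rw [card_union_of_disjoint (hdisj S' hS'sub), hS'card, card_pair hne]
          omega
        · intro i hi hip
          obtain ⟨hiV, hie⟩ := mem_sdiff.1 (hS'sub hi)
          exact hie (mem_hyperedgeIn.2 ⟨hiV, hip⟩)
      · rw [mem_coe, mem_powersetCard] at h₁ h₂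
        rw [← union_sdiff_cancel_right (hdisj S₁ h₁.1),
          ← union_sdiff_cancel_right (hdisj S₂ h₂.1)]
        simpa only using congrArg (· \ ({r, s} : Finset ι)) h

end GkOn

lemma SimpleGraph.ncard_edgeSet {V : Type} (G : SimpleGraph V) [Fintype G.edgeSet] :
    G.edgeSet.ncard = #G.edgeFinset := by
  rw [← SimpleGraph.coe_edgeFinset, Set.ncard_coe_finset]

section GraphCounting

variable {ι : Type} [Fintype ι] {R : ι → Set (ℝ × ℝ)} {K : ℕ} {V : Finset ι}

lemma neighborFinset_GkOn_subset (r : ι) : (GkOn K R V).neighborFinset r ⊆ V.erase r := by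
  intro s hs
  rw [SimpleGraph.mem_neighborFinset] at hs
  exact mem_erase.2 ⟨hs.1.symm, hs.2.2.1⟩

lemma sum_degree_GkOn :
    ∑ r ∈ V, (GkOn K R V).degree r = 2 * #(GkOn K R V).edgeFinset := by
  rw [← SimpleGraph.sum_degrees_eq_twice_card_edges]
  refine sum_subset (subset_univ V) fun r _ hr => card_eq_zero.2 <| eq_empty_of_forall_notMem ?_
  intro s hs
  exact hr ((SimpleGraph.mem_neighborFinset _ _ _).1 hs).2.1

lemma two_mul_card_edgeFinset_GkOn_le :
    2 * #(GkOn K R V).edgeFinset ≤ #V * (#V - 1) := by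
  rw [← sum_degree_GkOn]
  refine (sum_le_sum fun r hr => (card_le_card (neighborFinset_GkOn_subset r)).trans_eq
    (card_erase_of_mem hr)).trans_eq ?_
  rw [sum_const, smul_eq_mul]

end GraphCounting

section ClarksonShor

variable {ι : Type} [Fintype ι] {R : ι → Set (ℝ × ℝ)} {K : ℕ} {d α : ℝ}

lemma card_edgeSet_GkOn_mul_choose_le
    (hH : ∀ V' : Finset ι, ((GkOn 0 R V').edgeSet.ncard : ℝ) ≤ d / 2 * (#V' : ℝ) ^ (1 + α))
    {t : ℕ} (ht : 2 ≤ t) (V : Finset ι) :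
    ((GkOn K R V).edgeSet.ncard : ℝ) * (#V - (K + 2)).choose (t - 2) ≤
      (#V).choose t * (d / 2 * (t : ℝ) ^ (1 + α)) := by
  have key := card_nsmul_le_card_nsmul (s := (GkOn K R V).edgeFinset) (t := V.powersetCard t)
    (fun e (S : Finset ι) => e ∈ (GkOn 0 R S).edgeSet)
    (m := ((#V - (K + 2)).choose (t - 2) : ℝ)) (n := d / 2 * (t : ℝ) ^ (1 + α)) ?_ ?_
  · simpa only [nsmul_eq_mul, card_powersetCard, SimpleGraph.ncard_edgeSet] using key
  · intro e he
    induction e using Sym2.ind with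
    | h r s =>
      exact_mod_cast choose_le_card_bipartiteAbove_GkOn ht (SimpleGraph.mem_edgeFinset.1 he)
  · intro S hS
    rw [← (mem_powersetCard.1 hS).2, ← Set.ncard_coe_finset]
    refine le_trans ?_ (hH S)
    exact_mod_cast Set.ncard_le_ncard (fun e he => (mem_filter.1 he).2) (Set.toFinite _)

lemma cast_choose_mul_cast_choose_two (m t : ℕ) (ht : 2 ≤ t) :
    (m.choose t : ℝ) * (t * (t - 1)) = m * (m - 1) * (m - 2).choose (t - 2) := by
  have h := congrArg (fun n : ℕ => (n : ℝ)) (Nat.choose_mul (n := m) (k := t) ht)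
  simp only [Nat.cast_mul, Nat.cast_choose_two] at h
  linarith

lemma cast_descFactorial_le_exp_mul {a K j : ℕ} (h : j + K ≤ a) :
    (a.descFactorial j : ℝ) ≤ exp (K * j / (a - K - j + 1)) * (a - K).descFactorial j := by
  have hden : (0 : ℝ) < a - K - j + 1 := by
    have : ((j + K : ℕ) : ℝ) ≤ a := by exact_mod_cast h
    push_cast at this; linarith
  set x : ℝ := K / (a - K - j + 1)
  have hx : 0 ≤ x := by positivity
  have hxK : x * (a - K - j + 1) = K := div_mul_cancel₀ _ hden.ne'
  have hfactor : ∀ i ∈ range j, ((a - i : ℕ) : ℝ) ≤ (1 + x) * ((a - K - i : ℕ) : ℝ) := by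
    intro i hi
    have hi : i < j := mem_range.1 hi
    rw [Nat.cast_sub (by omega), Nat.cast_sub (by omega), Nat.cast_sub (by omega)]
    have hle : (a : ℝ) - K - j + 1 ≤ a - K - i := by
      have : ((i + 1 : ℕ) : ℝ) ≤ j := by exact_mod_cast hi
      push_cast at this; linarith
    have : (K : ℝ) ≤ x * (a - K - i) := by
      calc (K : ℝ) = x * (a - K - j + 1) := hxK.symm
        _ ≤ x * (a - K - i) := mul_le_mul_of_nonneg_left hle hx
    linarith
  rw [Nat.descFactorial_eq_prod_range, Nat.descFactorial_eq_prod_range, Nat.cast_prod,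
    Nat.cast_prod]
  calc ∏ i ∈ range j, ((a - i : ℕ) : ℝ) ≤ ∏ i ∈ range j, (1 + x) * ((a - K - i : ℕ) : ℝ) :=
        prod_le_prod (fun _ _ => by positivity) hfactor
    _ = (1 + x) ^ j * ∏ i ∈ range j, ((a - K - i : ℕ) : ℝ) := by
        rw [prod_mul_distrib, prod_const, card_range]
    _ ≤ exp x ^ j * ∏ i ∈ range j, ((a - K - i : ℕ) : ℝ) := by
        gcongr
        rw [add_comm]
        exact add_one_le_exp x
    _ = exp (K * j / (a - K - j + 1)) * ∏ i ∈ range j, ((a - K - i : ℕ) : ℝ) := by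
        rw [← exp_nat_mul, mul_comm (K : ℝ), mul_div_assoc]

lemma cast_choose_le_exp_mul {a K j : ℕ} (h : j + K ≤ a) :
    (a.choose j : ℝ) ≤ exp (K * j / (a - K - j + 1)) * (a - K).choose j := by
  have hd := cast_descFactorial_le_exp_mul h
  simp only [Nat.descFactorial_eq_factorial_mul_choose, Nat.cast_mul] at hd
  have hpos : (0 : ℝ) < (j.factorial : ℝ) := by exact_mod_cast Nat.factorial_pos j
  nlinarith

/-- With `t ≤ m / (K + 1)`, discarding `K` of the `m - 2` candidates costs at most a factor `e`. -/
lemma cast_choose_sub_two_le {m t : ℕ} (ht : 2 ≤ t) (hmt : (K + 1) * t ≤ m) :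
    ((m - 2).choose (t - 2) : ℝ) ≤ exp 1 * (m - (K + 2)).choose (t - 2) := by
  have htKm : t + K ≤ m := by nlinarith
  have h := cast_choose_le_exp_mul (a := m - 2) (K := K) (j := t - 2) (by omega)
  rw [Nat.sub_sub, add_comm 2 K] at h
  refine h.trans (mul_le_mul_of_nonneg_right (exp_le_exp.2 ?_) (Nat.cast_nonneg _))
  have hmt' : ((K : ℝ) + 1) * t ≤ m := by exact_mod_cast hmt
  have ht' : (2 : ℝ) ≤ t := by exact_mod_cast ht
  rw [Nat.cast_sub (show 2 ≤ m by omega), Nat.cast_sub ht, div_le_one (by push_cast; nlinarith)]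
  push_cast
  nlinarith

end ClarksonShor

section Sparsity

variable {ι : Type} [Fintype ι] {R : ι → Set (ℝ × ℝ)} {K : ℕ} {V : Finset ι} {d α : ℝ}

lemma card_edgeSet_GkOn_le_of_card_lt (hV : #V < 4 * (K + 1)) :
    ((GkOn K R V).edgeSet.ncard : ℝ) ≤ 2 * (K + 1) * #V := by
  have h := two_mul_card_edgeFinset_GkOn_le (R := R) (K := K) (V := V)
  have : #V * (#V - 1) ≤ #V * (4 * (K + 1)) := Nat.mul_le_mul_left _ (by omega)
  have : #V * (4 * (K + 1)) = 2 * (2 * (K + 1) * #V) := by ring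
  rw [SimpleGraph.ncard_edgeSet]
  exact_mod_cast (by omega : #(GkOn K R V).edgeFinset ≤ 2 * (K + 1) * #V)

/-- Clarkson–Shor: double count the pairs (edge of `G_K(V)`, `t`-subset `S ⊆ V` in whose
`G_0(S)` the edge survives). -/
lemma card_edgeSet_GkOn_mul_sub_one_le (hd : 0 ≤ d)
    (hH : ∀ V' : Finset ι, ((GkOn 0 R V').edgeSet.ncard : ℝ) ≤ d / 2 * (#V' : ℝ) ^ (1 + α))
    {t : ℕ} (ht : 2 ≤ t) (htV : (K + 1) * t ≤ #V) :
    ((GkOn K R V).edgeSet.ncard : ℝ) * (t - 1) ≤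
      exp 1 * (d / 2) * #V * (#V - 1) * (t : ℝ) ^ α := by
  set m := #V
  set E := ((GkOn K R V).edgeSet.ncard : ℝ)
  set C' := ((m - (K + 2)).choose (t - 2) : ℝ)
  have htK : t + K ≤ m := by nlinarith
  have hC' : 0 < C' := Nat.cast_pos.2 (Nat.choose_pos (by omega))
  have htr : (2 : ℝ) ≤ t := by exact_mod_cast ht
  have hm : (2 : ℝ) ≤ m := by exact_mod_cast (by nlinarith : 2 ≤ m)
  refine le_of_mul_le_mul_right ?_ (by positivity : 0 < C' * t)
  calc E * (t - 1) * (C' * t) = E * C' * (t * (t - 1)) := by ring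
    _ ≤ (m.choose t * (d / 2 * (t : ℝ) ^ (1 + α))) * (t * (t - 1)) :=
        mul_le_mul_of_nonneg_right (card_edgeSet_GkOn_mul_choose_le hH ht V) (by nlinarith)
    _ = (m.choose t * (t * (t - 1))) * (d / 2 * t * t ^ α) := by
        rw [rpow_add (by positivity), rpow_one]; ring
    _ = m * (m - 1) * (m - 2).choose (t - 2) * (d / 2 * t * t ^ α) := by
        rw [cast_choose_mul_cast_choose_two m t ht]
    _ ≤ m * (m - 1) * (exp 1 * C') * (d / 2 * t * t ^ α) := by
        gcongr
        · nlinarith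
        · exact cast_choose_sub_two_le ht htV
    _ = exp 1 * (d / 2) * m * (m - 1) * t ^ α * (C' * t) := by ring

/-- Sampling `t = ⌊m / (K + 1)⌋` of the `m` regions. -/
lemma card_edgeSet_GkOn_le_of_le_card (hd : 0 ≤ d) (hα : 0 ≤ α)
    (hH : ∀ V' : Finset ι, ((GkOn 0 R V').edgeSet.ncard : ℝ) ≤ d / 2 * (#V' : ℝ) ^ (1 + α))
    (hV : 4 * (K + 1) ≤ #V) :
    ((GkOn K R V).edgeSet.ncard : ℝ) ≤ exp 1 * d * (K + 1) * (#V : ℝ) ^ (1 + α) := by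
  set m := #V
  set t := m / (K + 1)
  have htm : (K + 1) * t ≤ m := Nat.mul_div_le m (K + 1)
  have ht4 : 4 ≤ t := (Nat.le_div_iff_mul_le (by omega)).2 (by linarith)
  have htr : (4 : ℝ) ≤ t := by exact_mod_cast ht4
  have hmr : (m : ℝ) < (K + 1) * (t + 1) := by
    exact_mod_cast Nat.lt_mul_div_succ m (Nat.succ_pos K)
  have hpow : (t : ℝ) ^ α ≤ (m : ℝ) ^ α :=
    rpow_le_rpow (by positivity) (by exact_mod_cast Nat.div_le_self m (K + 1)) hα
  have hm1 : (m : ℝ) - 1 ≤ 2 * (K + 1) * (t - 1) := by nlinarith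
  have hm0 : (0 : ℝ) < m := by exact_mod_cast (by omega : 0 < m)
  have ht1 : (0 : ℝ) < t - 1 := by linarith
  refine le_of_mul_le_mul_right ?_ ht1
  calc ((GkOn K R V).edgeSet.ncard : ℝ) * (t - 1)
      ≤ exp 1 * (d / 2) * m * (m - 1) * t ^ α :=
        card_edgeSet_GkOn_mul_sub_one_le hd hH (by omega) htm
    _ ≤ exp 1 * (d / 2) * m * (2 * (K + 1) * (t - 1)) * m ^ α :=
        mul_le_mul (mul_le_mul_of_nonneg_left hm1 (by positivity)) hpow (by positivity)
          (by positivity)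
    _ = exp 1 * d * (K + 1) * (m : ℝ) ^ (1 + α) * (t - 1) := by
        rw [rpow_add hm0, rpow_one]; ring

lemma card_edgeSet_GkOn_le (hd : 0 ≤ d) (hα : 0 ≤ α)
    (hH : ∀ V' : Finset ι, ((GkOn 0 R V').edgeSet.ncard : ℝ) ≤ d / 2 * (#V' : ℝ) ^ (1 + α))
    (K : ℕ) (V : Finset ι) :
    ((GkOn K R V).edgeSet.ncard : ℝ) ≤ (K + 1) * (exp 1 * d + 2) * (#V : ℝ) ^ (1 + α) := by
  rcases lt_or_ge #V (4 * (K + 1)) with hV | hV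
  · have hself : (#V : ℝ) ≤ (#V : ℝ) ^ (1 + α) := by
      rcases V.eq_empty_or_nonempty with rfl | hne
      · simp; positivity
      · exact self_le_rpow_of_one_le (by exact_mod_cast hne.card_pos) (by linarith)
    calc ((GkOn K R V).edgeSet.ncard : ℝ) ≤ 2 * (K + 1) * #V := card_edgeSet_GkOn_le_of_card_lt hV
      _ ≤ (K + 1) * (exp 1 * d + 2) * (#V : ℝ) ^ (1 + α) := by
        have h2 : (2 : ℝ) ≤ exp 1 * d + 2 := by linarith [mul_nonneg (exp_pos 1).le hd]
        rw [mul_comm 2, mul_assoc, mul_assoc]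
        gcongr
  · refine (card_edgeSet_GkOn_le_of_le_card hd hα hH hV).trans ?_
    have : 0 ≤ (K + 1) * (#V : ℝ) ^ (1 + α) := by positivity
    nlinarith

lemma exists_degree_GkOn_le (hd : 0 ≤ d) (hα : 0 ≤ α)
    (hH : ∀ V' : Finset ι, ((GkOn 0 R V').edgeSet.ncard : ℝ) ≤ d / 2 * (#V' : ℝ) ^ (1 + α))
    (K : ℕ) {V : Finset ι} (hV : V.Nonempty) :
    ∃ r ∈ V, ((GkOn K R V).degree r : ℝ) ≤ 2 * (K + 1) * (exp 1 * d + 2) * (#V : ℝ) ^ α := by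
  refine exists_le_of_sum_le hV ?_
  have hsum : (∑ r ∈ V, ((GkOn K R V).degree r : ℝ)) = 2 * (GkOn K R V).edgeSet.ncard := by
    rw [SimpleGraph.ncard_edgeSet]; exact_mod_cast sum_degree_GkOn
  rw [hsum, sum_const, nsmul_eq_mul]
  calc 2 * ((GkOn K R V).edgeSet.ncard : ℝ)
      ≤ 2 * ((K + 1) * (exp 1 * d + 2) * (#V : ℝ) ^ (1 + α)) := by
        gcongr; exact card_edgeSet_GkOn_le hd hα hH K V
    _ = #V * (2 * (K + 1) * (exp 1 * d + 2) * (#V : ℝ) ^ α) := by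
        rw [rpow_add (by exact_mod_cast hV.card_pos), rpow_one]; ring

end Sparsity

section Coloring

variable {ι : Type} {R : ι → Set (ℝ × ℝ)}

/-- Any two regions of a hyperedge of size at most `K + 2` are adjacent in `G_K`, so on such a
hyperedge the colour `c` of `r` is not repeated. -/
lemma IsColorful.update {K : ℕ} {V : Finset ι} {r : ι} {χ : ι → ℕ} {c : ℕ}
    (hχ : IsColorful R (K + 2) (V.erase r) χ) (hc : ∀ s, (GkOn K R V).Adj r s → χ s ≠ c) :
    IsColorful R (K + 2) V (Function.update χ r c) := by
  intro p
  have hχp := hχ p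
  rw [hyperedgeIn_erase] at hχp
  set e := hyperedgeIn R V p
  have himage : (e.erase r).image (Function.update χ r c) = (e.erase r).image χ :=
    image_congr fun s hs => Function.update_of_ne (ne_of_mem_erase hs) _ _
  by_cases hr : r ∈ e
  · have hinsert : e.image (Function.update χ r c) = insert c ((e.erase r).image χ) := by
      conv_lhs => rw [← insert_erase hr]
      rw [image_insert, Function.update_self, himage]
    have hcard := card_erase_of_mem hr
    rw [hinsert]
    by_cases hsmall : #e ≤ K + 2
    · have hcN : c ∉ (e.erase r).image χ := by
        simp only [mem_image, not_exists, not_and]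
        exact fun s hs => hc s (GkOn_adj_iff.2
          ⟨(ne_of_mem_erase hs).symm, p, hr, mem_of_mem_erase hs, hsmall⟩)
      rw [card_insert_of_notMem hcN]
      omega
    · have := card_le_card (subset_insert c ((e.erase r).image χ))
      omega
  · rw [erase_eq_of_notMem hr] at hχp himage
    rwa [himage]

lemma exists_isColorful_of_degree_le [Fintype ι] {K D : ℕ} {V : Finset ι}
    (hdeg : ∀ W ⊆ V, W.Nonempty → ∃ r ∈ W, (GkOn K R W).degree r ≤ D) :
    ∃ χ : ι → ℕ, (∀ r ∈ V, χ r ≤ D) ∧ IsColorful R (K + 2) V χ := by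
  induction V using Finset.strongInduction with
  | H V ih =>
  rcases V.eq_empty_or_nonempty with rfl | hV
  · exact ⟨0, by simp, fun p => by simp [hyperedgeIn]⟩
  obtain ⟨r, hr, hdegr⟩ := hdeg V Subset.rfl hV
  obtain ⟨χ, hχD, hχ⟩ := ih (V.erase r) (erase_ssubset hr)
    fun W hW => hdeg W (hW.trans (erase_subset r V))
  set N := ((GkOn K R V).neighborFinset r).image χ
  obtain ⟨c, hc, hcN⟩ := exists_mem_notMem_of_card_lt_card (s := N) (t := range (D + 1))
    (by rw [card_range]; exact Nat.lt_succ_of_le (card_image_le.trans hdegr))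
  refine ⟨Function.update χ r c, fun s hs => ?_, hχ.update fun s hrs hsc => hcN ?_⟩
  · rcases eq_or_ne s r with rfl | hsr
    · simpa [Nat.lt_succ_iff] using hc
    · rw [Function.update_of_ne hsr]
      exact hχD s (mem_erase.2 ⟨hsr, hs⟩)
  · exact mem_image.2 ⟨s, (SimpleGraph.mem_neighborFinset _ _ _).2 hrs, hsc⟩

lemma IsColorful.isPeelableLayer {k : ℕ} {V : Finset ι} {χ : ι → ℕ}
    (hχ : IsColorful R (k + 1) V χ) (c : ℕ) : IsPeelableLayer R k V {r ∈ V | χ r = c} := by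
  intro p
  have hχp := hχ p
  set e := hyperedgeIn R V p
  constructor
  · intro hsmall
    have hinj : Set.InjOn χ e := card_image_iff.1 <|
      le_antisymm card_image_le (by rwa [min_eq_left (by omega)] at hχp)
    refine card_le_one.2 fun x hx y hy => hinj (mem_inter.1 hx).1 (mem_inter.1 hy).1 ?_
    rw [(mem_filter.1 (mem_inter.1 hx).2).2, (mem_filter.1 (mem_inter.1 hy).2).2]
  · intro hbig
    have hsub : e.image χ ⊆ insert c ((e \ {r ∈ V | χ r = c}).image χ) := by
      intro x hx
      obtain ⟨y, hy, rfl⟩ := mem_image.1 hx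
      by_cases hyc : χ y = c
      · exact hyc ▸ mem_insert_self _ _
      · exact mem_insert_of_mem
          (mem_image_of_mem χ (mem_sdiff.2 ⟨hy, fun h => hyc (mem_filter.1 h).2⟩))
    have := (card_le_card hsub).trans (card_insert_le _ _)
    have := card_image_le (s := e \ {r ∈ V | χ r = c}) (f := χ)
    omega

lemma exists_card_le_mul_card_colorClass {V : Finset ι} {χ : ι → ℕ} {D : ℕ}
    (hχ : ∀ r ∈ V, χ r ≤ D) : ∃ c, (#V : ℝ) ≤ (D + 1) * #{r ∈ V | χ r = c} := by
  obtain ⟨c, -, hc⟩ := exists_le_card_fiber_of_nsmul_le_card_of_maps_to (t := range (D + 1))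
    (b := (#V : ℝ) / (D + 1)) (fun r hr => mem_range.2 (Nat.lt_succ_of_le (hχ r hr)))
    ⟨0, mem_range.2 D.succ_pos⟩ (by rw [card_range, nsmul_eq_mul]; push_cast; field_simp; rfl)
  exact ⟨c, by rwa [div_le_iff₀' (by positivity)] at hc⟩

lemma uniquelyColored_sdiff_subset {e I : Finset ι} {φ : ι → ℕ} {L : ℕ}
    (hL : ∀ x ∈ e \ I, φ x < L) :
    uniquelyColored φ (e \ I) ⊆ uniquelyColored (fun r => if r ∈ I then L else φ r) e := by
  intro x hx
  obtain ⟨hxeI, hxu⟩ := mem_uniquelyColored.1 hx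
  obtain ⟨hxe, hxI⟩ := mem_sdiff.1 hxeI
  refine mem_uniquelyColored.2 ⟨hxe, fun j hj hjx => ?_⟩
  by_cases hjI : j ∈ I
  · simp only [hjI, hxI, if_true, if_false] at hjx
    exact absurd hjx (hL x hxeI).ne'
  · simp only [hjI, hxI, if_false] at hjx
    exact hxu j (mem_sdiff.2 ⟨hj, hjI⟩) hjx

lemma inter_subset_uniquelyColored {e I : Finset ι} {φ : ι → ℕ} {L : ℕ}
    (hL : ∀ x ∈ e \ I, φ x < L) (hone : #(e ∩ I) ≤ 1) :
    e ∩ I ⊆ uniquelyColored (fun r => if r ∈ I then L else φ r) e := by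
  intro x hx
  obtain ⟨hxe, hxI⟩ := mem_inter.1 hx
  refine mem_uniquelyColored.2 ⟨hxe, fun j hj hjx => ?_⟩
  by_cases hjI : j ∈ I
  · exact card_le_one.1 hone j (mem_inter.2 ⟨hj, hjI⟩) x hx
  · simp only [hjI, hxI, if_true, if_false] at hjx
    exact absurd hjx (hL j (mem_sdiff.2 ⟨hj, hjI⟩)).ne

lemma IsStrongCF.peel {k : ℕ} {V I : Finset ι} {φ : ι → ℕ} {L : ℕ}
    (hI : IsPeelableLayer R k V I) (hφ : IsStrongCF R k (V \ I) φ) (hL : ∀ r ∈ V \ I, φ r < L) :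
    IsStrongCF R k V (fun r => if r ∈ I then L else φ r) := by
  intro p
  have hφp := hφ p
  have hIp := hI p
  rw [hyperedgeIn_sdiff] at hφp
  set e := hyperedgeIn R V p
  have hLe : ∀ x ∈ e \ I, φ x < L := fun x hx =>
    hL x (sdiff_subset_sdiff (fun y hy => (mem_hyperedgeIn.1 hy).1) Subset.rfl hx)
  have hout := card_le_card (uniquelyColored_sdiff_subset hLe)
  have := card_le_card (uniquelyColored_subset φ (e \ I))
  rcases lt_or_ge k #e with hbig | hsmall
  · have := hIp.2 hbig
    omega
  · have hone := hIp.1 hsmall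
    have hdisj : Disjoint (uniquelyColored φ (e \ I)) (e ∩ I) :=
      disjoint_left.2 fun x hx hx' =>
        (mem_sdiff.1 (uniquelyColored_subset _ _ hx)).2 (mem_inter.1 hx').2
    have hunion := card_le_card (union_subset (uniquelyColored_sdiff_subset hLe)
      (inter_subset_uniquelyColored hLe hone))
    rw [card_union_of_disjoint hdisj] at hunion
    have := card_sdiff_add_card_inter e I
    have := card_le_card (sdiff_subset : e \ I ⊆ e)
    omega

lemma exists_isStrongCF_of_peel {k : ℕ} (F : ℕ → ℝ) (hF0 : 0 ≤ F 0)
    (hpeel : ∀ V : Finset ι, V.Nonempty →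
      ∃ I ⊆ V, I.Nonempty ∧ IsPeelableLayer R k V I ∧ F #(V \ I) + 1 ≤ F #V)
    (V : Finset ι) :
    ∃ (φ : ι → ℕ) (L : ℕ), (∀ r ∈ V, φ r < L) ∧ (L : ℝ) ≤ F #V ∧ IsStrongCF R k V φ := by
  induction V using Finset.strongInduction with
  | H V ih =>
  rcases V.eq_empty_or_nonempty with rfl | hV
  · exact ⟨0, 0, by simp, by simpa using hF0, fun p => by simp [hyperedgeIn]⟩
  obtain ⟨I, hIV, hI, hlayer, hF⟩ := hpeel V hV
  obtain ⟨φ, L, hφL, hLF, hφ⟩ := ih (V \ I) (sdiff_ssubset hIV hI)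
  refine ⟨fun r => if r ∈ I then L else φ r, L + 1, fun r hr => ?_, ?_,
    hφ.peel hlayer hφL⟩
  · dsimp only
    split_ifs with hrI
    · exact L.lt_succ_self
    · exact (hφL r (mem_sdiff.2 ⟨hr, hrI⟩)).trans L.lt_succ_self
  · push_cast; linarith

lemma IsStrongCF.isSCFRegions [Fintype ι] {k : ℕ} {φ : ι → ℕ} (h : IsStrongCF R k univ φ) :
    IsSCFRegions k R φ := by
  intro p
  have hp := h p
  rw [← coe_hyperedgeIn_univ, Set.ncard_coe_finset]
  set e := hyperedgeIn R univ p
  have hue := uniquelyColored_subset φ e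
  refine ⟨fun hk => ?_, fun hk => ?_⟩
  · obtain ⟨S, hS, hSk⟩ := exists_subset_card_eq (s := uniquelyColored φ e) (n := k) (by omega)
    exact ⟨S, coe_subset.2 (hS.trans hue), by rwa [Set.ncard_coe_finset],
      fun i hi j hj hij => (mem_uniquelyColored.1 (hS hi)).2 j hj hij⟩
  · have hu : uniquelyColored φ e = e := eq_of_subset_of_card_le hue (by omega)
    intro x hx y hy hxy
    rw [← hu] at hx
    exact ((mem_uniquelyColored.1 hx).2 y hy hxy.symm).symm

end Coloring

section Potential

lemma sub_div_le_log_sub_log {x y : ℝ} (hx : 0 < x) (hy : 0 < y) :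
    (y - x) / y ≤ log y - log x := by
  have h := one_sub_inv_le_log_of_pos (div_pos hy hx)
  rwa [inv_div, log_div hy.ne' hx.ne', one_sub_div hy.ne'] at h

lemma rpow_mul_sub_div_le {α x y : ℝ} (hα : 0 < α) (hα1 : α ≤ 1) (hx : 0 ≤ x) (hy : 0 < y) :
    y ^ α * ((y - x) / y) ≤ y ^ α / α - x ^ α / α := by
  have h := rpow_one_add_le_one_add_mul_self (s := x / y - 1) (by linarith [div_nonneg hx hy.le])
    hα.le hα1
  rw [add_sub_cancel, div_rpow hx hy.le, div_le_iff₀ (rpow_pos_of_pos hy α)] at h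
  rw [← sub_div, le_div_iff₀ hα, sub_div, div_self hy.ne']
  nlinarith

/-- Bounds the number of peeling rounds when each round on `m` regions removes at least
`m / (A m^α + 1)` of them; `G` plays the role of `∫ x^(α - 1)`, i.e. `log` or `x^α / α`. -/
noncomputable def peelPotential (A : ℝ) (G : ℝ → ℝ) (m : ℕ) : ℝ :=
  if m = 0 then 0 else A * G m + log m + 1

lemma peelPotential_step {A α : ℝ} {G : ℝ → ℝ} (hA : 0 ≤ A)
    (hG : ∀ x y : ℝ, 0 < x → x ≤ y → y ^ α * ((y - x) / y) ≤ G y - G x)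
    (hG0 : ∀ y : ℝ, 1 ≤ y → 0 ≤ G y) {m m' : ℕ} (hm : 0 < m) (hm'm : m' ≤ m)
    (hstep : (m : ℝ) ≤ (A * (m : ℝ) ^ α + 1) * (m - m')) :
    peelPotential A G m' + 1 ≤ peelPotential A G m := by
  have hmr : (1 : ℝ) ≤ m := by exact_mod_cast hm
  simp only [peelPotential, hm.ne', if_false]
  rcases Nat.eq_zero_or_pos m' with rfl | hm'
  · have := mul_nonneg hA (hG0 m hmr)
    have := log_nonneg hmr
    simp only [if_true]; linarith
  · have hm'r : (0 : ℝ) < m' := by exact_mod_cast hm'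
    have hlog := sub_div_le_log_sub_log hm'r (by linarith : (0 : ℝ) < m)
    have hGm := hG m' m hm'r (by exact_mod_cast hm'm)
    have hδ : 1 ≤ (A * (m : ℝ) ^ α + 1) * ((m - m') / m) := by
      rwa [← mul_div_assoc, le_div_iff₀ (by linarith : (0 : ℝ) < m), one_mul]
    simp only [hm'.ne', if_false]
    nlinarith [mul_le_mul_of_nonneg_left hGm hA]

lemma peelPotential_log_le {A c : ℝ} {k n : ℕ} (hk : 2 ≤ k) (hn : 2 ≤ n) (hA : A + 1 ≤ c * k) :
    peelPotential A log n ≤ (c + 1) * k * log n := by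
  have hlog : 1 / 2 ≤ log n := by
    have := log_le_log (by norm_num) (by exact_mod_cast hn : (2 : ℝ) ≤ n)
    linarith [log_two_gt_d9]
  have hkr : (2 : ℝ) ≤ k := by exact_mod_cast hk
  rw [peelPotential, if_neg (by omega)]
  nlinarith [mul_le_mul_of_nonneg_right hA (by linarith : (0 : ℝ) ≤ log n)]

lemma peelPotential_rpow_le {A c α : ℝ} {k n : ℕ} (hα : 0 < α) (hα1 : α ≤ 1) (hn : 1 ≤ n)
    (hA : A + 2 ≤ c * k) :
    peelPotential A (fun y => y ^ α / α) n ≤ c / α * k * (n : ℝ) ^ α := by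
  have hnr : (1 : ℝ) ≤ n := by exact_mod_cast hn
  have hpow : 1 ≤ (n : ℝ) ^ α := one_le_rpow hnr hα.le
  have hlog : log n ≤ (n : ℝ) ^ α / α := by
    rw [le_div_iff₀ hα, mul_comm, ← log_rpow (by linarith)]
    linarith [log_le_sub_one_of_pos (by linarith : (0 : ℝ) < (n : ℝ) ^ α)]
  have hone : 1 ≤ (n : ℝ) ^ α / α := by rw [le_div_iff₀ hα]; nlinarith
  rw [peelPotential, if_neg (by omega)]
  calc A * ((n : ℝ) ^ α / α) + log n + 1 ≤ (A + 2) * ((n : ℝ) ^ α / α) := by linarith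
    _ ≤ c * k * ((n : ℝ) ^ α / α) := by gcongr
    _ = c / α * k * (n : ℝ) ^ α := by ring

end Potential

section Assembly

variable {ι : Type} [Fintype ι] {R : ι → Set (ℝ × ℝ)} {d α : ℝ}

lemma exists_isPeelableLayer (hd : 0 ≤ d) (hα : 0 ≤ α)
    (hH : ∀ V' : Finset ι, ((GkOn 0 R V').edgeSet.ncard : ℝ) ≤ d / 2 * (#V' : ℝ) ^ (1 + α))
    (K : ℕ) {V : Finset ι} (hV : V.Nonempty) :
    ∃ I ⊆ V, I.Nonempty ∧ IsPeelableLayer R (K + 1) V I ∧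
      (#V : ℝ) ≤ (2 * (K + 1) * (exp 1 * d + 2) * (#V : ℝ) ^ α + 1) * #I := by
  set A := 2 * ((K : ℝ) + 1) * (exp 1 * d + 2)
  set D := ⌊A * (#V : ℝ) ^ α⌋₊
  obtain ⟨χ, hχD, hχ⟩ := exists_isColorful_of_degree_le (R := R) (K := K) (D := D)
    fun W hW hWne => by
      obtain ⟨r, hr, hdeg⟩ := exists_degree_GkOn_le hd hα hH K hWne
      refine ⟨r, hr, Nat.le_floor (hdeg.trans ?_)⟩
      gcongr
  obtain ⟨c, hc⟩ := exists_card_le_mul_card_colorClass hχD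
  have hD : (D : ℝ) ≤ A * (#V : ℝ) ^ α := Nat.floor_le (by positivity)
  have hI : (#V : ℝ) ≤ (A * (#V : ℝ) ^ α + 1) * #{r ∈ V | χ r = c} := hc.trans (by gcongr)
  refine ⟨_, filter_subset _ V, nonempty_of_ne_empty fun h0 => ?_, hχ.isPeelableLayer c, hI⟩
  rw [h0, card_empty, Nat.cast_zero, mul_zero] at hI
  exact (not_le.2 (by exact_mod_cast hV.card_pos)) hI

lemma exists_isSCFRegions_card_image_le (hd : 0 ≤ d) (hα : 0 ≤ α)
    (hH : ∀ V' : Finset ι, ((GkOn 0 R V').edgeSet.ncard : ℝ) ≤ d / 2 * (#V' : ℝ) ^ (1 + α))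
    {G : ℝ → ℝ} (hG : ∀ x y : ℝ, 0 < x → x ≤ y → y ^ α * ((y - x) / y) ≤ G y - G x)
    (hG0 : ∀ y : ℝ, 1 ≤ y → 0 ≤ G y) (K : ℕ) :
    ∃ φ : ι → ℕ, IsSCFRegions (K + 1) R φ ∧ (#(univ.image φ) : ℝ) ≤
      peelPotential (2 * (K + 1) * (exp 1 * d + 2)) G (Fintype.card ι) := by
  have hA : 0 ≤ 2 * ((K : ℝ) + 1) * (exp 1 * d + 2) := by positivity
  obtain ⟨φ, L, hφL, hLF, hφ⟩ := exists_isStrongCF_of_peel (R := R)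
    (peelPotential (2 * (K + 1) * (exp 1 * d + 2)) G) (by simp [peelPotential]) (fun V hV => by
      obtain ⟨I, hIV, hI, hlayer, hcard⟩ := exists_isPeelableLayer hd hα hH K hV
      refine ⟨I, hIV, hI, hlayer, peelPotential_step hA hG hG0 hV.card_pos
        (card_le_card sdiff_subset) ?_⟩
      rwa [card_sdiff_of_subset hIV, Nat.cast_sub (card_le_card hIV), sub_sub_cancel])
    univ
  refine ⟨φ, hφ.isSCFRegions, le_trans ?_ (card_univ (α := ι) ▸ hLF)⟩
  exact_mod_cast (card_le_card fun c hc => by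
    obtain ⟨r, -, rfl⟩ := mem_image.1 hc
    exact mem_range.2 (hφL r (mem_univ r))).trans_eq (card_range L)

end Assembly

end

theorem stmt5 (d α : ℝ) (hd : 0 < d) (hα0 : 0 ≤ α) (hα1 : α ≤ 1) :
    ∃ C : ℝ, 0 < C ∧
      ∀ (ι : Type) [Fintype ι] (R : ι → Set (ℝ × ℝ)) (k : ℕ), 2 ≤ k →
        2 ≤ Fintype.card ι →
        (∀ V' : Finset ι,
          (((GkOn 0 R ↑V').edgeSet).ncard : ℝ) ≤ (d / 2) * (V'.card : ℝ) ^ (1 + α)) →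
        (α = 0 → ∃ φ : ι → ℕ, IsSCFRegions (k - 1) R φ ∧
          ((Finset.univ.image φ).card : ℝ) ≤ C * k * Real.log (Fintype.card ι)) ∧
        (0 < α → ∃ φ : ι → ℕ, IsSCFRegions (k - 1) R φ ∧
          ((Finset.univ.image φ).card : ℝ) ≤ C * k * (Fintype.card ι : ℝ) ^ α) := by
  have hA (k : ℕ) (hk : 2 ≤ k) : 2 * (((k - 2 : ℕ) : ℝ) + 1) * (exp 1 * d + 2) + 2 ≤
      (2 * exp 1 * d + 4) * k := by
    have : ((k - 2 : ℕ) : ℝ) + 1 + 1 = k := by norm_cast; omega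
    nlinarith [mul_pos (exp_pos 1) hd]
  have hk1 (k : ℕ) (hk : 2 ≤ k) : k - 2 + 1 = k - 1 := by omega
  rcases hα0.eq_or_lt with rfl | hα
  · refine ⟨2 * exp 1 * d + 4 + 1, by positivity, fun ι _ R k hk hn hH =>
      ⟨fun _ => ?_, fun h => absurd h (lt_irrefl 0)⟩⟩
    obtain ⟨φ, hφ, hcard⟩ := exists_isSCFRegions_card_image_le hd.le le_rfl hH (G := log)
      (fun x y hx hxy => by simpa using sub_div_le_log_sub_log hx (hx.trans_le hxy))
      (fun y hy => log_nonneg hy) (k - 2)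
    exact ⟨φ, hk1 k hk ▸ hφ, hcard.trans (peelPotential_log_le hk hn (by linarith [hA k hk]))⟩
  · refine ⟨(2 * exp 1 * d + 4) / α, by positivity, fun ι _ R k hk hn hH =>
      ⟨fun h => absurd h hα.ne', fun _ => ?_⟩⟩
    obtain ⟨φ, hφ, hcard⟩ := exists_isSCFRegions_card_image_le hd.le hα0 hH
      (G := fun y => y ^ α / α)
      (fun x y hx hxy => rpow_mul_sub_div_le hα hα1 hx.le (hx.trans_le hxy))
      (fun y hy => div_nonneg (rpow_nonneg (by linarith) α) hα.le) (k - 2)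
    exact ⟨φ, hk1 k hk ▸ hφ, hcard.trans (peelPotential_rpow_le hα hα1 (by omega) (hA k hk))⟩
end
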